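/- Let p be a polynomial with real coefficients of degree 8, with coefficients c_i, such that c_0 > 0, p is palindromic (c_i = c_{8-i} for all 0 ≤ i ≤ 8), and the coefficients of p alternate in sign ((-1)^i · c_i ≥ 0 for every i ≥ 0). Suppose at least two of the complex roots of p, counted with multiplicity, lie on the unit circle, and that -c_7/c_8 ≥ 2. If p has a complex root z with Re z ≤ -1, then p has a real root x with x > 1 and x + 1/x > -c_7/c_8. -/

import Mathlib

/-!
Since the coefficients alternate in sign and `c₀ > 0`, `p` has no root in `(-∞, 0]`; in particular
`z` is not real and `|z| > 1`. The multiset `R` of complex roots is stable under conjugation (`p`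
is real) and under inversion (`p` is palindromic), so `R = A + B + B⁻¹` where `A` consists of the
roots on the unit circle and `B` of those outside the closed unit disc. As `z, z̄ ∈ B` and
`|A| ≥ 2`, the count `|A| + 2|B| = 8` leaves room for at most one more root `x ∈ B`, real by
conjugation symmetry. Taking real parts in Vieta's formula `-c₇/c₈ = ∑ R`, and using
`Re (z + 1/z) < -1` and `Re w ≤ 1` on `A`: without `x` we would get `-c₇/c₈ < 2`, and with it
`-c₇/c₈ < x + 1/x`, where `x > 1`.
-/

open Polynomial ComplexConjugate

namespace Polynomial

theorem reverse_one {R : Type*} [Semiring R] : (1 : R[X]).reverse = 1 := by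
  simpa using reverse_C (1 : R)

theorem reverse_X_sub_C {K : Type*} [Field K] {r : K} (hr : r ≠ 0) :
    (X - C r).reverse = C (-r) * (X - C r⁻¹) := by
  have hX : (X : K[X]).reverse = 1 := by simpa [reverse_one] using reverse_mul_X (1 : K[X])
  rw [sub_eq_add_neg, ← C_neg, reverse_add_C, hX, mul_sub, ← C_mul]
  simp [hr]
  ring

theorem reverse_multiset_prod {R : Type*} [CommSemiring R] [NoZeroDivisors R]
    (s : Multiset R[X]) : s.prod.reverse = (s.map reverse).prod := by
  induction s using Multiset.induction_on with
  | empty => simp [reverse_one]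
  | cons f s ih => simp [reverse_mul_of_domain, ih]

theorem Splits.roots_reverse {K : Type*} [Field K] {f : K[X]} (hf : f.Splits)
    (h0 : f.coeff 0 ≠ 0) : f.reverse.roots = f.roots.map (·⁻¹) := by
  have hroots : ∀ r ∈ f.roots, r ≠ 0 := by
    rintro r hr rfl
    exact h0 (by simpa [coeff_zero_eq_eval_zero] using isRoot_of_mem_roots hr)
  have hrev : f.reverse = C (f.leadingCoeff * (f.roots.map (-·)).prod) *
      (f.roots.map fun r => X - C r⁻¹).prod := by
    conv_lhs => rw [hf.eq_prod_roots]
    rw [reverse_mul_of_domain, reverse_C, reverse_multiset_prod, Multiset.map_map,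
      Multiset.map_congr (f := reverse ∘ fun r : K => X - C r) rfl fun r hr =>
        reverse_X_sub_C (hroots r hr), Multiset.prod_map_mul,
      C_mul, mul_assoc, map_multiset_prod, Multiset.map_map]
    rfl
  have hc : f.leadingCoeff * (f.roots.map (-·)).prod ≠ 0 := by
    refine mul_ne_zero (leadingCoeff_ne_zero.mpr ?_) (Multiset.prod_ne_zero ?_)
    · rintro rfl; exact h0 rfl
    · simpa using hroots 0
  rw [hrev, roots_C_mul _ hc]
  simpa [Multiset.map_map, Function.comp_def] using roots_multiset_prod_X_sub_C (f.roots.map (·⁻¹))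

theorem reverse_eq_self_of_coeff_eq {R : Type*} [Semiring R] {p : R[X]}
    (h : ∀ i ≤ p.natDegree, p.coeff i = p.coeff (p.natDegree - i)) : p.reverse = p := by
  ext n
  rw [coeff_reverse]
  rcases le_or_gt n p.natDegree with hn | hn
  · rw [revAt_le hn, h n hn]
  · rw [revAt_eq_self_of_lt hn]

theorem eval_pos_of_alternating {p : ℝ[X]} (h0 : 0 < p.coeff 0)
    (halt : ∀ i, 0 ≤ (-1 : ℝ) ^ i * p.coeff i) {x : ℝ} (hx : x ≤ 0) : 0 < p.eval x := by
  rw [eval_eq_sum_range]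
  refine Finset.sum_pos' (fun i _ => ?_) ⟨0, by simp, by simpa using h0⟩
  have : p.coeff i * x ^ i = (-1) ^ i * p.coeff i * (-x) ^ i := by
    have h : (-1 : ℝ) ^ i * (-1) ^ i = 1 := by rw [← mul_pow]; norm_num
    rw [neg_pow]
    linear_combination -(p.coeff i * x ^ i) * h
  rw [this]
  exact mul_nonneg (halt i) (pow_nonneg (neg_nonneg.mpr hx) i)

theorem Splits.sum_roots_eq {K : Type*} [Field K] {f : K[X]} (hf : f.Splits)
    (hdeg : f.natDegree ≠ 0) : f.roots.sum = -f.coeff (f.natDegree - 1) / f.leadingCoeff := by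
  have hlc : f.leadingCoeff ≠ 0 := leadingCoeff_ne_zero.mpr (by rintro rfl; simp at hdeg)
  rw [eq_div_iff hlc, ← nextCoeff_of_natDegree_pos (Nat.pos_of_ne_zero hdeg),
    hf.nextCoeff_eq_neg_sum_roots_mul_leadingCoeff]
  ring

theorem map_inv_aroots_of_coeff_eq {K L : Type*} [Field K] [Field L] [IsAlgClosed L]
    [Algebra K L] {p : K[X]} (h0 : p.coeff 0 ≠ 0)
    (hpal : ∀ i ≤ p.natDegree, p.coeff i = p.coeff (p.natDegree - i)) :
    (p.aroots L).map (·⁻¹) = p.aroots L := by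
  have hP0 : (p.map (algebraMap K L)).coeff 0 ≠ 0 := by simpa using h0
  rw [aroots_def, ← (IsAlgClosed.splits _).roots_reverse hP0, reverse_eq_self_of_coeff_eq]
  intro i hi
  rw [natDegree_map] at hi ⊢
  simp only [coeff_map, hpal i hi]

theorem map_conj_roots_map_ofReal (p : ℝ[X]) :
    (p.map (algebraMap ℝ ℂ)).roots.map conj = (p.map (algebraMap ℝ ℂ)).roots := by
  rw [← (IsAlgClosed.splits _).roots_map, map_map]
  congr 2
  ext x
  simp

theorem re_sum_roots_map_ofReal {p : ℝ[X]} (hdeg : p.natDegree ≠ 0) :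
    (p.map (algebraMap ℝ ℂ)).roots.sum.re = -p.coeff (p.natDegree - 1) / p.leadingCoeff := by
  rw [(IsAlgClosed.splits _).sum_roots_eq (by rwa [natDegree_map]), leadingCoeff,
    natDegree_map, coeff_map, coeff_map, leadingCoeff, Complex.coe_algebraMap]
  norm_cast

theorem aeval_ofReal_eq_zero_iff {p : ℝ[X]} {x : ℝ} :
    aeval (x : ℂ) p = 0 ↔ p.eval x = 0 := by
  rw [← Complex.ofReal_eq_zero]
  exact Eq.congr_left (aeval_algebraMap_apply_eq_algebraMap_eval x p)

end Polynomial

namespace Complex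

theorem re_multiset_sum (M : Multiset ℂ) : M.sum.re = (M.map re).sum :=
  map_multiset_sum reAddGroupHom M

theorem one_lt_norm_of_re_le_neg_one {z : ℂ} (hre : z.re ≤ -1) (him : z.im ≠ 0) : 1 < ‖z‖ := by
  have h : 1 < ‖z‖ ^ 2 := by
    rw [Complex.sq_norm, normSq_apply]
    nlinarith [mul_self_pos.mpr him]
  nlinarith [norm_nonneg z]

theorem re_add_inv_lt_neg_one {z : ℂ} (hre : z.re ≤ -1) : (z + z⁻¹).re < -1 := by
  have hz : 0 < normSq z := normSq_pos.mpr (by rintro rfl; norm_num at hre)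
  rw [add_re, inv_re]
  have : z.re / normSq z < 0 := div_neg_of_neg_of_pos (by linarith) hz
  linarith

end Complex

namespace Multiset

theorem filter_norm_eq_one_add_filter_one_lt_norm_add_map_inv {𝕜 : Type*}
    [NormedDivisionRing 𝕜] {R : Multiset 𝕜} (hinv : R.map (·⁻¹) = R) (h0 : (0 : 𝕜) ∉ R) :
    R.filter (‖·‖ = 1) + R.filter (1 < ‖·‖) + (R.filter (1 < ‖·‖)).map (·⁻¹) = R := by
  have hlt : (R.filter (1 < ‖·‖)).map (·⁻¹) = R.filter (‖·‖ < 1) := by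
    conv_rhs => rw [← hinv]
    rw [filter_map]
    congr 1
    refine filter_congr fun w hw => ?_
    have hw0 : 0 < ‖w‖ := norm_pos_iff.mpr (ne_of_mem_of_not_mem hw h0)
    simp [norm_inv, inv_lt_one₀ hw0]
  have hne : R.filter (1 < ‖·‖) + R.filter (‖·‖ < 1) = R.filter (¬‖·‖ = 1) := by
    have hempty : R.filter (fun w => 1 < ‖w‖ ∧ ‖w‖ < 1) = 0 :=
      filter_eq_nil.mpr fun w _ h => (h.1.trans h.2).false
    rw [filter_add_filter, hempty, add_zero]
    exact filter_congr fun w _ => by rw [or_comm, ← ne_iff_lt_or_gt]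
  rw [hlt, add_assoc, hne, filter_add_not]

theorem exists_eq_cons_cons_of_map_eq {α : Type*} [DecidableEq α] {σ : α → α}
    (hσ : Function.Involutive σ) {M : Multiset α} (hM : M.map σ = M) {a : α} (ha : a ∈ M)
    (hne : σ a ≠ a) : ∃ M', M = a ::ₘ σ a ::ₘ M' ∧ M'.map σ = M' := by
  have hσa : σ a ∈ M.erase a := (mem_erase_of_ne hne).mpr (hM ▸ mem_map_of_mem σ ha)
  set M' := (M.erase a).erase (σ a)
  have hMeq : M = a ::ₘ σ a ::ₘ M' := by rw [cons_erase hσa, cons_erase ha]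
  refine ⟨M', hMeq, ?_⟩
  rwa [hMeq, map_cons, map_cons, hσ a, cons_swap, cons_inj_right, cons_inj_right] at hM

theorem re_sum_le_card {A : Multiset ℂ} (hA : ∀ w ∈ A, ‖w‖ ≤ 1) : A.sum.re ≤ card A := by
  have h := sum_le_card_nsmul (A.map Complex.re) 1 (by
    simpa using fun w hw => (Complex.re_le_norm w).trans (hA w hw))
  rwa [Complex.re_multiset_sum, ← nsmul_one, ← card_map Complex.re]

end Multiset

open Multiset in
theorem exists_real_mem_of_card_eq_eight {R : Multiset ℂ} (hcard : card R = 8)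
    (hconj : R.map conj = R) (hinv : R.map (·⁻¹) = R) (h0 : (0 : ℂ) ∉ R)
    (hcirc : 2 ≤ card (R.filter (‖·‖ = 1))) {z : ℂ} (hz : z ∈ R) (him : z.im ≠ 0)
    (hre : z.re ≤ -1) (hsum : 2 ≤ R.sum.re) :
    ∃ x ∈ R, conj x = x ∧ 1 < ‖x‖ ∧ R.sum.re < (x + x⁻¹).re := by
  set A := R.filter (‖·‖ = 1)
  set B := R.filter (1 < ‖·‖)
  have hR : A + B + B.map (·⁻¹) = R := filter_norm_eq_one_add_filter_one_lt_norm_add_map_inv hinv h0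
  have hB : B.map conj = B := by
    calc B.map conj = (R.map conj).filter (1 < ‖·‖) := by
          rw [filter_map]
          exact congrArg _ (filter_congr fun w _ => by simp)
      _ = B := by rw [hconj]
  obtain ⟨B', hBeq, hB'⟩ := exists_eq_cons_cons_of_map_eq (fun w => Complex.conj_conj w) hB
    (mem_filter.mpr ⟨hz, Complex.one_lt_norm_of_re_le_neg_one hre him⟩)
    (fun h => him (Complex.conj_eq_iff_im.mp h))
  have hcardA : card A + 2 * (2 + card B') = 8 := by
    rw [← hcard, ← hR, hBeq]
    simp only [add_cons, map_cons, cons_add, card_cons, card_add, card_map]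
    ring
  have hsumR : R.sum.re = A.sum.re + 2 * (z + z⁻¹).re + (B'.map fun w => (w + w⁻¹).re).sum := by
    rw [← hR, hBeq]
    simp only [add_cons, map_cons, cons_add, sum_cons, Multiset.sum_add, Complex.add_re,
      Complex.inv_re, Complex.conj_re, Complex.normSq_conj, Complex.re_multiset_sum,
      Multiset.map_map, Function.comp_apply, sum_map_add]
    ring
  have hA : A.sum.re ≤ card A := re_sum_le_card fun w hw => (mem_filter.mp hw).2.le
  have hz' := Complex.re_add_inv_lt_neg_one hre
  rcases Nat.le_one_iff_eq_zero_or_eq_one.mp (by omega : card B' ≤ 1) with h | h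
  · rw [card_eq_zero] at h
    subst h
    have : (card A : ℝ) = 4 := by exact_mod_cast (by simpa using hcardA : card A = 4)
    rw [Multiset.map_zero, sum_zero, add_zero] at hsumR
    linarith
  · obtain ⟨x, rfl⟩ := card_eq_one.mp h
    have hxB : x ∈ B := by simp [hBeq]
    have : (card A : ℝ) = 2 := by exact_mod_cast (by simpa using hcardA : card A = 2)
    refine ⟨x, mem_of_mem_filter hxB, by simpa using hB', (mem_filter.mp hxB).2, ?_⟩
    rw [map_singleton, sum_singleton] at hsumR
    linarith

/-- A real polynomial of degree `8` with positive constant term, palindromic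
coefficients (`cᵢ = c_{8-i}`) and coefficients alternating in sign, having at
least two complex roots (counted with multiplicity) on the unit circle and
satisfying `-c₇/c₈ ≥ 2`: if it has a complex root `z` with `Re z ≤ -1`, then it
has a real root `x > 1` with `x + 1/x > -c₇/c₈`. -/
theorem stmt_6 (p : Polynomial ℝ)
    (hdeg : p.natDegree = 8)
    (h0 : 0 < p.coeff 0)
    (hpal : ∀ i ≤ 8, p.coeff i = p.coeff (8 - i))
    (halt : ∀ i : ℕ, 0 ≤ (-1 : ℝ) ^ i * p.coeff i)
    (hcirc : 2 ≤
      ((p.map (algebraMap ℝ ℂ)).roots.filter fun z => ‖z‖ = 1).card)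
    (hq : 2 ≤ -(p.coeff 7) / p.coeff 8)
    (z : ℂ) (hz : Polynomial.aeval z p = 0) (hre : z.re ≤ -1) :
    ∃ x : ℝ, p.eval x = 0 ∧ 1 < x ∧ -(p.coeff 7) / p.coeff 8 < x + 1 / x := by
  have hsum : (p.map (algebraMap ℝ ℂ)).roots.sum.re = -(p.coeff 7) / p.coeff 8 := by
    rw [re_sum_roots_map_ofReal (by rw [hdeg]; norm_num), hdeg, leadingCoeff, hdeg]
  have him : z.im ≠ 0 := fun him => by
    rw [← Complex.re_add_im z, him, Complex.ofReal_zero, zero_mul, add_zero,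
      aeval_ofReal_eq_zero_iff] at hz
    exact (eval_pos_of_alternating h0 halt (by linarith)).ne' hz
  have hp : p ≠ 0 := by rintro rfl; simp at h0
  obtain ⟨x, hxR, hxconj, hx1, hx⟩ := exists_real_mem_of_card_eq_eight
    (by rw [splits_iff_card_roots.mp (IsAlgClosed.splits _), natDegree_map, hdeg])
    (map_conj_roots_map_ofReal p) (map_inv_aroots_of_coeff_eq h0.ne' (hdeg ▸ hpal))
    (by simpa [hp, ← coeff_zero_eq_aeval_zero'] using h0.ne') hcirc (by simpa [hp] using hz)
    him hre (hsum ▸ hq)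
  rw [← Complex.conj_eq_iff_re.mp hxconj] at hxR hx1 hx
  have hroot : p.eval x.re = 0 := by simpa [hp, aeval_ofReal_eq_zero_iff] using hxR
  have hxpos : 0 < x.re := lt_of_not_ge fun h => (eval_pos_of_alternating h0 halt h).ne' hroot
  refine ⟨x.re, hroot, ?_, ?_⟩
  · rwa [Complex.norm_real, Real.norm_of_nonneg hxpos.le] at hx1
  · rw [← hsum, one_div]
    exact_mod_cast hx
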